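/- arXiv:2303.10088 — 2 statements merged into one kernel-verified Lean document; each statement's English description precedes it below -/
import Mathlib

section
/- Let ≤P be a partial order on ℕ. For all a, b, m, n ∈ ℕ with a ≥ m and b ≥ n, the words σ_m(a) and σ_n(b) are compatible (i.e., the ≤lex-smaller of the two is compatible with the ≤lex-larger). -/
/-- The three-letter alphabet `Σ = {L, X, R}`. -/
inductive Sig : Type
  | L
  | X
  | R
  deriving DecidableEq

namespace Sig

def val : Sig → ℕ
  | L => 0
  | X => 1
  | R => 2

/-- The order `L <lex X <lex R` on letters. -/
def le (a b : Sig) : Prop := a.val ≤ b.val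

def lt (a b : Sig) : Prop := a.val < b.val

end Sig

/-- Finite words over the alphabet `Σ = {L, X, R}`. -/
abbrev Word : Type := List Sig

/-- The `i`-th letter of `w` (with a junk value out of range). -/
def idx (w : Word) (i : ℕ) : Sig := w.getD i Sig.L

/-- Strict lexicographic order on words: comparison at the first differing position, a
proper initial segment preceding its extensions. -/
def lexLt (u v : Word) : Prop :=
  (∃ i, i < u.length ∧ i < v.length ∧ Sig.lt (idx u i) (idx v i) ∧
    ∀ j < i, idx u j = idx v j) ∨
  (u.length < v.length ∧ ∀ j < u.length, idx u j = idx v j)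

def lexLe (u v : Word) : Prop := lexLt u v ∨ u = v

/-- The relation `≺`: there is `i < min(|u|,|v|)` with `(u_i, v_i) = (L, R)` and
`u_j ≤lex v_j` for all `j < i`. -/
def prec (u v : Word) : Prop :=
  ∃ i, i < u.length ∧ i < v.length ∧ idx u i = Sig.L ∧ idx v i = Sig.R ∧
    ∀ j < i, Sig.le (idx u j) (idx v j)

/-- The relation `⪯`. -/
def preceq (u v : Word) : Prop := prec u v ∨ u = v

/-- The relation `⊴`: element-wise comparison of words of the same length. -/
def trleq (u v : Word) : Prop :=
  u.length = v.length ∧ ∀ i < u.length, Sig.le (idx u i) (idx v i)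

/-- The relation `⊥`: `⊴`-incomparability. -/
def perp (u v : Word) : Prop := ¬ trleq u v ∧ ¬ trleq v u

/-- `u` and `v` are related if `u ⪯ v`, `v ⪯ u` or `u ⊥ v`. -/
def related (u v : Word) : Prop := preceq u v ∨ preceq v u ∨ perp u v

/-- The compatibility conditions for a pair `u ≤lex v`. -/
def compatPair (u v : Word) : Prop :=
  (∀ l < min u.length v.length, ¬ (idx u l = Sig.R ∧ idx v l = Sig.L)) ∧
  ((∃ l < min u.length v.length, idx u l = Sig.L ∧ idx v l = Sig.R) →
    ∀ l < min u.length v.length, Sig.le (idx u l) (idx v l))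

/-- `u` and `v` are compatible: the `≤lex`-smaller of the two satisfies the compatibility
conditions with the `≤lex`-larger. -/
def compatible (u v : Word) : Prop :=
  (lexLe u v ∧ compatPair u v) ∨ (lexLe v u ∧ compatPair v u)

/-- `S̄`: the segClosure of `S` under initial segments. -/
def segClosure (S : Set Word) : Set Word := {u | ∃ w ∈ S, u <+: w}

/-- Level `l` of a set of words. -/
def level (S : Set Word) (l : ℕ) : Set Word := {w | w ∈ S ∧ w.length = l}

/-- `S̄_l` : level `l` of the segClosure of `S`. -/
def cLevel (S : Set Word) (l : ℕ) : Set Word := level (segClosure S) l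

/-- Isomorphism of level structures `(A; ⪯, ⊴, ≤lex)`: a bijection preserving and
reflecting `⪯`, `⊴` and `≤lex`. -/
def LevelIso (A B : Set Word) : Prop :=
  ∃ e : Word → Word, Set.BijOn e A B ∧
    ∀ u ∈ A, ∀ v ∈ A,
      (preceq u v ↔ preceq (e u) (e v)) ∧
      (trleq u v ↔ trleq (e u) (e v)) ∧
      (lexLe u v ↔ lexLe (e u) (e v))

/-- A level `i` of `S` is interesting. -/
def Interesting (S : Set Word) (i : ℕ) : Prop :=
  ¬ LevelIso (cLevel S i) (cLevel S (i + 1)) ∨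
  (∃ u ∈ cLevel S (i + 1), ∃ v ∈ cLevel S (i + 1),
    ¬ compatible u v ∧ compatible (u.take i) (v.take i)) ∨
  (∃ u ∈ S, u.length = i)

/-- `τ_S(w)`: delete the characters of `w` whose indices are not interesting levels of `S`. -/
noncomputable def tauW (S : Set Word) (w : Word) : Word :=
  ((List.range w.length).filter
    (fun i => @decide (Interesting S i) (Classical.propDecidable _))).map (fun i => idx w i)

/-- A function is shape-preserving if it commutes with taking embedding types. -/
def ShapePreserving (S : Set Word) (f : Word → Word) : Prop :=
  ∀ w ∈ S, tauW S w = tauW (f '' S) (f w)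

/-- `A⌢c`. -/
def appendSet (A : Set Word) (c : Sig) : Set Word := (fun w => w ++ [c]) '' A

def LeafLevelAt (S : Set Word) (l : ℕ) (w : Word) : Prop :=
  w ∈ cLevel S l ∧ (∀ u ∈ cLevel S l, u ≠ w → related w u) ∧
  cLevel S (l + 1) = appendSet (cLevel S l \ {w}) Sig.X

def LeafLevel (S : Set Word) (l : ℕ) : Prop := ∃ w, LeafLevelAt S l w

def SplitLevelAt (S : Set Word) (l : ℕ) (w : Word) : Prop :=
  w ∈ cLevel S l ∧
  cLevel S (l + 1) =
    appendSet {z ∈ cLevel S l | lexLt z w} Sig.X ∪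
    {w ++ [Sig.X], w ++ [Sig.R]} ∪
    appendSet {z ∈ cLevel S l | lexLt w z} Sig.R

def SplitLevel (S : Set Word) (l : ℕ) : Prop := ∃ w, SplitLevelAt S l w

def NewPerpLevelAt (S : Set Word) (l : ℕ) (v w : Word) : Prop :=
  v ∈ cLevel S l ∧ w ∈ cLevel S l ∧ lexLt v w ∧ ¬ related v w ∧
  (∀ u ∈ cLevel S l, lexLt v u → lexLt u w → perp u v ∨ perp u w) ∧
  cLevel S (l + 1) =
    appendSet {z ∈ cLevel S l | lexLt z v} Sig.X ∪
    {v ++ [Sig.R]} ∪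
    appendSet {z ∈ cLevel S l | lexLt v z ∧ lexLt z w ∧ perp z v} Sig.X ∪
    appendSet {z ∈ cLevel S l | lexLt v z ∧ lexLt z w ∧ ¬ perp z v} Sig.R ∪
    {w ++ [Sig.X]} ∪
    appendSet {z ∈ cLevel S l | lexLt w z} Sig.R

def NewPerpLevel (S : Set Word) (l : ℕ) : Prop := ∃ v w, NewPerpLevelAt S l v w

def NewPrecLevelAt (S : Set Word) (l : ℕ) (v w : Word) : Prop :=
  v ∈ cLevel S l ∧ w ∈ cLevel S l ∧ lexLt v w ∧ ¬ related v w ∧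
  (∀ u ∈ cLevel S l, lexLt u v → preceq u w ∨ perp u v) ∧
  (∀ u ∈ cLevel S l, lexLt w u → preceq v u ∨ perp w u) ∧
  cLevel S (l + 1) =
    appendSet {z ∈ cLevel S l | lexLt z v ∧ perp z v} Sig.X ∪
    appendSet {z ∈ cLevel S l | lexLt z v ∧ ¬ perp z v} Sig.L ∪
    {v ++ [Sig.L]} ∪
    appendSet {z ∈ cLevel S l | lexLt v z ∧ lexLt z w} Sig.X ∪
    {w ++ [Sig.R]} ∪
    appendSet {z ∈ cLevel S l | lexLt w z ∧ perp w z} Sig.X ∪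
    appendSet {z ∈ cLevel S l | lexLt w z ∧ ¬ perp w z} Sig.R

def NewPrecLevel (S : Set Word) (l : ℕ) : Prop := ∃ v w, NewPrecLevelAt S l v w

def ExactlyOne (a b c d : Prop) : Prop :=
  (a ∧ ¬b ∧ ¬c ∧ ¬d) ∨ (¬a ∧ b ∧ ¬c ∧ ¬d) ∨ (¬a ∧ ¬b ∧ c ∧ ¬d) ∨ (¬a ∧ ¬b ∧ ¬c ∧ d)

/-- A poset-diary: an antichain under the initial segment relation such that on each level
below the supremum of lengths exactly one of the four critical events happens. -/
def PosetDiary (S : Set Word) : Prop :=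
  (∀ u ∈ S, ∀ v ∈ S, u <+: v → u = v) ∧
  ∀ l : ℕ, (∃ w ∈ S, l < w.length) →
    ExactlyOne (LeafLevel S l) (SplitLevel S l) (NewPerpLevel S l) (NewPrecLevel S l)

/-- `σ_m(a)`: the word of the 1-type of `a` over `0,…,m−1` for a partial order `≤P` on `ℕ`. -/
noncomputable def sigmaWord (po : PartialOrder ℕ) (m a : ℕ) : Word :=
  (List.range m).map (fun i =>
    @ite Sig (po.lt a i) (Classical.propDecidable _) Sig.L
      (@ite Sig (po.lt i a) (Classical.propDecidable _) Sig.R Sig.X))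


noncomputable def sigLetter (po : PartialOrder ℕ) (a i : ℕ) : Sig :=
  @ite Sig (po.lt a i) (Classical.propDecidable _) Sig.L
      (@ite Sig (po.lt i a) (Classical.propDecidable _) Sig.R Sig.X)

lemma sigmaWord_length (po : PartialOrder ℕ) (m a : ℕ) :
    (sigmaWord po m a).length = m := by simp [sigmaWord]

lemma idx_sigmaWord (po : PartialOrder ℕ) {m i : ℕ} (a : ℕ) (h : i < m) :
    idx (sigmaWord po m a) i = sigLetter po a i := by
  simp [idx, sigmaWord, sigLetter, List.getD_eq_getElem?_getD, List.getElem?_map,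
    List.getElem?_range h]

lemma po_lt_trans (po : PartialOrder ℕ) {x y z : ℕ} (h1 : po.lt x y) (h2 : po.lt y z) :
    po.lt x z := @lt_trans ℕ po.toPreorder x y z h1 h2

lemma po_lt_irrefl (po : PartialOrder ℕ) {x : ℕ} (h : po.lt x x) : False :=
  @lt_irrefl ℕ po.toPreorder x h

lemma po_lt_asymm (po : PartialOrder ℕ) {x y : ℕ} (h1 : po.lt x y) (h2 : po.lt y x) : False :=
  po_lt_irrefl po (po_lt_trans po h1 h2)

lemma sigLetter_eq_L (po : PartialOrder ℕ) {a i : ℕ} :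
    sigLetter po a i = Sig.L ↔ po.lt a i := by
  unfold sigLetter
  split_ifs with h1 h2 <;> simp_all

lemma sigLetter_eq_R (po : PartialOrder ℕ) {a i : ℕ} :
    sigLetter po a i = Sig.R ↔ po.lt i a := by
  unfold sigLetter
  split_ifs with h1 h2 <;> simp_all
  exact fun h => po_lt_asymm po h1 h

lemma sigLetter_mono (po : PartialOrder ℕ) {a b : ℕ} (hab : po.lt a b) (i : ℕ) :
    Sig.le (sigLetter po a i) (sigLetter po b i) := by
  by_cases hai : po.lt a i <;> by_cases hia : po.lt i a <;>
    by_cases hbi : po.lt b i <;> by_cases hib : po.lt i b <;>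
    simp [sigLetter, Sig.le, Sig.val, hai, hia, hbi, hib] <;>
    first
    | exact (po_lt_asymm po hai hia).elim
    | exact (po_lt_asymm po hbi hib).elim
    | exact absurd (po_lt_trans po hab hbi) hai
    | exact absurd (po_lt_trans po hia hab) hib

lemma sig_trichot : ∀ x y : Sig, x ≠ y → Sig.lt x y ∨ Sig.lt y x := by
  intro x y h
  cases x <;> cases y <;> simp_all [Sig.lt, Sig.val]

lemma sig_val_le_of_lt {x y : Sig} (h : Sig.lt x y) : Sig.le x y := le_of_lt h

lemma compatPair_of_eq (po : PartialOrder ℕ) (a b m n : ℕ)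
    (h : ∀ i < min m n, idx (sigmaWord po m a) i = idx (sigmaWord po n b) i) :
    compatPair (sigmaWord po m a) (sigmaWord po n b) := by
  constructor
  · intro l hl ⟨hR, hL⟩
    rw [h l (by simpa [sigmaWord_length] using hl)] at hR
    rw [hR] at hL; exact Sig.noConfusion hL
  · rintro ⟨l, hl, hL, hR⟩
    rw [h l (by simpa [sigmaWord_length] using hl)] at hL
    rw [hL] at hR; exact Sig.noConfusion hR

lemma lexLe_of_eq (po : PartialOrder ℕ) (a b m n : ℕ) (hmn : m ≤ n)
    (h : ∀ i < min m n, idx (sigmaWord po m a) i = idx (sigmaWord po n b) i) :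
    lexLe (sigmaWord po m a) (sigmaWord po n b) := by
  rcases Nat.lt_or_ge n m with hlt0 | hge0
  case inl => omega
  rcases Nat.lt_or_eq_of_le hmn with hlt | heq
  · left; right
    refine ⟨by simp [sigmaWord_length, hlt], fun j hj => h j ?_⟩
    simp [sigmaWord_length] at hj ⊢; omega
  · right
    apply List.ext_getElem (by simp [sigmaWord_length, heq])
    intro i h1 h2
    have := h i (by simp [sigmaWord_length] at h1 ⊢; omega)
    simpa [idx, List.getD_eq_getElem?_getD, List.getElem?_eq_getElem, h1, h2] using this

lemma compat_half (po : PartialOrder ℕ) (a b m n : ℕ)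
    (i : ℕ) (hi : i < min m n)
    (hlt : Sig.lt (idx (sigmaWord po m a) i) (idx (sigmaWord po n b) i))
    (hpre : ∀ j < i, idx (sigmaWord po m a) j = idx (sigmaWord po n b) j) :
    lexLe (sigmaWord po m a) (sigmaWord po n b) ∧
      compatPair (sigmaWord po m a) (sigmaWord po n b) := by
  have him : i < m := lt_of_lt_of_le hi (min_le_left _ _)
  have hin : i < n := lt_of_lt_of_le hi (min_le_right _ _)
  refine ⟨Or.inl (Or.inl ⟨i, by simpa [sigmaWord_length] using him,
    by simpa [sigmaWord_length] using hin, hlt, hpre⟩), ?_, ?_⟩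
  · intro l hl ⟨hR, hL⟩
    simp only [sigmaWord_length, lt_min_iff] at hl
    rw [idx_sigmaWord po a hl.1, sigLetter_eq_R] at hR
    rw [idx_sigmaWord po b hl.2, sigLetter_eq_L] at hL
    have hba : po.lt b a := po_lt_trans po hL hR
    have := sigLetter_mono po hba i
    rw [idx_sigmaWord po a him, idx_sigmaWord po b hin] at hlt
    exact absurd this (not_le_of_gt hlt)
  · rintro ⟨l, hl, hL, hR⟩ l' hl'
    simp only [sigmaWord_length, lt_min_iff] at hl hl'
    rw [idx_sigmaWord po a hl.1, sigLetter_eq_L] at hL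
    rw [idx_sigmaWord po b hl.2, sigLetter_eq_R] at hR
    have hab : po.lt a b := po_lt_trans po hL hR
    rw [idx_sigmaWord po a hl'.1, idx_sigmaWord po b hl'.2]
    exact sigLetter_mono po hab l'

/-- any two words of 1-types of a partial order on `ℕ` are compatible. -/
theorem sigmaWord_compatible (po : PartialOrder ℕ) (a b m n : ℕ)
    (ham : m ≤ a) (hbn : n ≤ b) :
    compatible (sigmaWord po m a) (sigmaWord po n b) := by
  by_cases h : ∀ i < min m n, idx (sigmaWord po m a) i = idx (sigmaWord po n b) i
  · rcases le_total m n with hmn | hnm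
    · exact Or.inl ⟨lexLe_of_eq po a b m n hmn h, compatPair_of_eq po a b m n h⟩
    · have h' : ∀ i < min n m, idx (sigmaWord po n b) i = idx (sigmaWord po m a) i := by
        intro i hi; exact (h i (by omega)).symm
      exact Or.inr ⟨lexLe_of_eq po b a n m hnm h', compatPair_of_eq po b a n m h'⟩
  · push_neg at h
    have hex : ∃ i, i < min m n ∧ idx (sigmaWord po m a) i ≠ idx (sigmaWord po n b) i := h
    classical
    let i := Nat.find hex
    obtain ⟨hi, hne⟩ := Nat.find_spec hex
    have hpre : ∀ j < Nat.find hex,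
        idx (sigmaWord po m a) j = idx (sigmaWord po n b) j := by
      intro j hj
      by_contra hc
      have := Nat.find_min hex hj
      push_neg at this
      exact hc (by_contra fun hcc => hcc (this (by omega)))
    have htri : Sig.lt (idx (sigmaWord po m a) (Nat.find hex)) (idx (sigmaWord po n b) (Nat.find hex)) ∨
        Sig.lt (idx (sigmaWord po n b) (Nat.find hex)) (idx (sigmaWord po m a) (Nat.find hex)) := by
      exact sig_trichot _ _ hne
    rcases htri with hlt | hlt
    · exact Or.inl (compat_half po a b m n _ hi hlt hpre)
    · exact Or.inr (compat_half po b a n m _ (by omega) hlt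
        (fun j hj => (hpre j hj).symm))
end

section
/- Let S be a poset-diary. Then all words in S̄ are pairwise compatible, and for each level ℓ < sup_{w∈S}|w| the level structures of S̄_ℓ and S̄_{ℓ+1} are related as follows: (1) if level ℓ is a Leaf level, then the level structure of S̄_{ℓ+1} is isomorphic to the level structure of S̄_ℓ with the leaf word removed; (2) if level ℓ is a Splitting level, then the level structure of S̄_{ℓ+1} is isomorphic to the level structure of S̄_ℓ with one vertex v duplicated into v' <lex v'' such that neither v' ⪯ v'' nor v'' ⪯ v', and v' ⊴ v''; (3) if level ℓ introduces a new ⊥, then the level structure of S̄_{ℓ+1} is isomorphic to the level structure of S̄_ℓ with exactly one pair removed from the relation ⊴ (and thus added to ⊥), and no change to ⪯; (4) if level ℓ introduces a new ≺, then the level structure of S̄_{ℓ+1} is isomorphic to the level structure of S̄_ℓ with exactly one pair added to the relation ≺, and no pair added to ⊥. -/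
section DiaryProof

open Classical
attribute [local instance] Classical.propDecidable

lemma sig_val_inj : ∀ {a b : Sig}, a.val = b.val → a = b := by
  intro a b
  cases a <;> cases b <;> simp [Sig.val]

lemma sig_X_le {c : Sig} (h : c ≠ Sig.L) : Sig.le Sig.X c := by
  cases c <;> simp_all [Sig.le, Sig.val]

lemma sig_le_R (c : Sig) : Sig.le c Sig.R := by
  cases c <;> simp [Sig.le, Sig.val]

lemma sig_L_le (c : Sig) : Sig.le Sig.L c := by
  cases c <;> simp [Sig.le, Sig.val]

lemma sig_le_refl (c : Sig) : Sig.le c c := le_refl _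

lemma sig_R_le {c : Sig} (h : Sig.le Sig.R c) : c = Sig.R := by
  cases c <;> simp_all [Sig.le, Sig.val]

lemma idx_lt_len {u : Word} {i : ℕ} (h : i < u.length) : idx u i = u[i] :=
  List.getD_eq_getElem u Sig.L h

lemma idx_append_lt {u : Word} (v : Word) {i : ℕ} (h : i < u.length) :
    idx (u ++ v) i = idx u i := by
  unfold idx
  rw [List.getD_eq_getElem?_getD, List.getD_eq_getElem?_getD, List.getElem?_append, if_pos h]

lemma idx_append_self (u : Word) (c : Sig) : idx (u ++ [c]) u.length = c := by
  unfold idx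
  rw [List.getD_eq_getElem?_getD, List.getElem?_append_right (le_refl _)]
  simp

lemma idx_take {u : Word} {m i : ℕ} (h : i < m) (h2 : i < u.length) :
    idx (u.take m) i = idx u i := by
  have hlen : i < (u.take m).length := by
    rw [List.length_take]; exact lt_min h h2
  rw [idx_lt_len hlen, idx_lt_len h2, List.getElem_take]

lemma word_ext {u v : Word} (h : u.length = v.length)
    (h2 : ∀ i < u.length, idx u i = idx v i) : u = v := by
  apply List.ext_getElem h
  intro n h1 h1'
  rw [← idx_lt_len h1, ← idx_lt_len h1']
  exact h2 n h1

lemma lexLt_irrefl (u : Word) : ¬ lexLt u u := by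
  rintro (⟨i, _, _, hlt, _⟩ | ⟨h, _⟩)
  · exact absurd hlt (lt_irrefl _)
  · exact absurd h (lt_irrefl _)

lemma lexLt_trichotomy (u v : Word) : lexLt u v ∨ u = v ∨ lexLt v u := by
  by_cases hd : ∃ i, i < u.length ∧ i < v.length ∧ idx u i ≠ idx v i
  · have hspec := Nat.find_spec hd
    obtain ⟨h1, h2, h3⟩ := hspec
    have heq : ∀ j < Nat.find hd, idx u j = idx v j := by
      intro j hj
      by_contra hne
      exact Nat.find_min hd hj ⟨lt_trans hj h1, lt_trans hj h2, hne⟩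
    rcases Nat.lt_trichotomy (idx u (Nat.find hd)).val (idx v (Nat.find hd)).val with hc | hc | hc
    · exact Or.inl (Or.inl ⟨Nat.find hd, h1, h2, hc, heq⟩)
    · exact absurd (sig_val_inj hc) h3
    · exact Or.inr (Or.inr (Or.inl ⟨Nat.find hd, h2, h1, hc, fun j hj => (heq j hj).symm⟩))
  · push_neg at hd
    rcases Nat.lt_trichotomy u.length v.length with hc | hc | hc
    · exact Or.inl (Or.inr ⟨hc, fun j hj => hd j hj (lt_trans hj hc)⟩)
    · refine Or.inr (Or.inl (word_ext hc (fun i hi => hd i hi (hc ▸ hi))))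
    · exact Or.inr (Or.inr (Or.inr ⟨hc, fun j hj => (hd j (lt_trans hj hc) hj).symm⟩))

lemma lexLt_asymm {u v : Word} (h : lexLt u v) : ¬ lexLt v u := by
  rintro (⟨i', hi'1, hi'2, hlt', heq'⟩ | ⟨hl', heq'⟩) <;>
    rcases h with ⟨i, hi1, hi2, hlt, heq⟩ | ⟨hl, heq⟩
  · rcases Nat.lt_trichotomy i i' with hc | rfl | hc
    · rw [heq' i hc] at hlt; exact absurd hlt (lt_irrefl _)
    · exact absurd (lt_trans hlt hlt') (lt_irrefl _)
    · rw [heq i' hc] at hlt'; exact absurd hlt' (lt_irrefl _)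
  · rw [heq i' hi'2] at hlt'; exact absurd hlt' (lt_irrefl _)
  · rw [heq' i hi2] at hlt; exact absurd hlt (lt_irrefl _)
  · exact absurd (lt_trans hl hl') (lt_irrefl _)

lemma lexLt_trans {u v w : Word} (h1 : lexLt u v) (h2 : lexLt v w) : lexLt u w := by
  rcases h1 with ⟨i, hi1, hi2, hlt, heq⟩ | ⟨hl, heq⟩ <;>
    rcases h2 with ⟨i', hi'1, hi'2, hlt', heq'⟩ | ⟨hl', heq'⟩
  · rcases Nat.lt_trichotomy i i' with hc | rfl | hc
    · refine Or.inl ⟨i, hi1, lt_trans hc hi'2, ?_, fun j hj => (heq j hj).trans (heq' j (lt_trans hj hc))⟩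
      rwa [← heq' i hc]
    · exact Or.inl ⟨i, hi1, hi'2, lt_trans hlt hlt', fun j hj => (heq j hj).trans (heq' j hj)⟩
    · refine Or.inl ⟨i', lt_trans hc hi1, hi'2, ?_, fun j hj => (heq j (lt_trans hj hc)).trans (heq' j hj)⟩
      rwa [heq i' hc]
  · refine Or.inl ⟨i, hi1, lt_of_lt_of_le hi2 (le_of_lt hl'), ?_, fun j hj => (heq j hj).trans (heq' j (lt_trans hj hi2))⟩
    rwa [← heq' i hi2]
  · rcases Nat.lt_trichotomy i' u.length with hc | hc | hc
    · refine Or.inl ⟨i', hc, hi'2, ?_, fun j hj => (heq j (lt_trans hj hc)).trans (heq' j hj)⟩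
      rwa [heq i' hc]
    · subst hc
      exact Or.inr ⟨hi'2, fun j hj => (heq j hj).trans (heq' j hj)⟩
    · exact Or.inr ⟨lt_trans hc hi'2, fun j hj => (heq j hj).trans (heq' j (lt_trans hj hc))⟩
  · exact Or.inr ⟨lt_trans hl hl', fun j hj => (heq j hj).trans (heq' j (lt_trans hj hl))⟩

lemma lexLe_refl (u : Word) : lexLe u u := Or.inr rfl

lemma lexLe_trans {u v w : Word} (h1 : lexLe u v) (h2 : lexLe v w) : lexLe u w := by
  rcases h1 with h1 | rfl
  · rcases h2 with h2 | rfl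
    · exact Or.inl (lexLt_trans h1 h2)
    · exact Or.inl h1
  · exact h2

lemma lexLt_of_le_of_lt {u v w : Word} (h1 : lexLe u v) (h2 : lexLt v w) : lexLt u w := by
  rcases h1 with h1 | rfl
  · exact lexLt_trans h1 h2
  · exact h2

lemma lexLt_of_lt_of_le {u v w : Word} (h1 : lexLt u v) (h2 : lexLe v w) : lexLt u w := by
  rcases h2 with h2 | rfl
  · exact lexLt_trans h1 h2
  · exact h1

lemma lexLe_antisymm {u v : Word} (h1 : lexLe u v) (h2 : lexLe v u) : u = v := by
  rcases h1 with h1 | rfl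
  · rcases h2 with h2 | rfl
    · exact absurd h2 (lexLt_asymm h1)
    · rfl
  · rfl

lemma ne_of_lexLt {u v : Word} (h : lexLt u v) : u ≠ v := by
  rintro rfl; exact lexLt_irrefl u h

lemma trleq_refl (u : Word) : trleq u u := ⟨rfl, fun i _ => le_refl _⟩

lemma trleq_trans {u v w : Word} (h1 : trleq u v) (h2 : trleq v w) : trleq u w :=
  ⟨h1.1.trans h2.1, fun i hi => le_trans (h1.2 i hi) (h2.2 i (h1.1 ▸ hi))⟩

lemma trleq_lexLe {u v : Word} (h : trleq u v) : lexLe u v := by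
  rcases lexLt_trichotomy u v with hc | hc | hc
  · exact Or.inl hc
  · exact Or.inr hc
  · rcases hc with ⟨i, hi1, hi2, hlt, heq⟩ | ⟨hl, heq⟩
    · exact absurd (lt_of_le_of_lt (h.2 i hi2) hlt) (lt_irrefl _)
    · rw [h.1] at hl; exact absurd hl (lt_irrefl _)

lemma not_trleq_of_lexLt {u v : Word} (h : lexLt u v) : ¬ trleq v u := by
  intro h2
  rcases trleq_lexLe h2 with h3 | h3
  · exact lexLt_asymm h h3
  · exact ne_of_lexLt h h3.symm

lemma trleq_of_lexLt_not_perp {u v : Word} (h : lexLt u v) (h2 : ¬ perp u v) : trleq u v := by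
  unfold perp at h2
  push_neg at h2
  by_cases hc : trleq u v
  · exact hc
  · exact absurd (h2 hc) (not_trleq_of_lexLt h)

lemma unrel_trleq {v w : Word} (hlex : lexLt v w) (hnrel : ¬ related v w) : trleq v w := by
  apply trleq_of_lexLt_not_perp hlex
  intro hp
  exact hnrel (Or.inr (Or.inr hp))

lemma trleq_antisymm {u v : Word} (h1 : trleq u v) (h2 : trleq v u) : u = v :=
  word_ext h1.1 (fun i hi => sig_val_inj (Nat.le_antisymm (h1.2 i hi) (h2.2 i (h1.1 ▸ hi))))

lemma len_app (u : Word) (c : Sig) : (u ++ [c]).length = u.length + 1 := by simp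

lemma lexLt_append {u v : Word} (h : u.length = v.length) (c c' : Sig) :
    lexLt (u ++ [c]) (v ++ [c']) ↔ lexLt u v ∨ (u = v ∧ Sig.lt c c') := by
  constructor
  · rintro (⟨i, hi1, hi2, hlt, heq⟩ | ⟨hl, heq⟩)
    · rw [len_app] at hi1 hi2
      rcases Nat.lt_succ_iff_lt_or_eq.1 hi1 with hi | rfl
      · rw [idx_append_lt _ hi, idx_append_lt _ (h ▸ hi)] at hlt
        refine Or.inl (Or.inl ⟨i, hi, h ▸ hi, hlt, fun j hj => ?_⟩)
        have := heq j hj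
        rwa [idx_append_lt _ (lt_trans hj hi), idx_append_lt _ (h ▸ lt_trans hj hi)] at this
      · rw [idx_append_self, h, idx_append_self] at hlt
        refine Or.inr ⟨word_ext h (fun j hj => ?_), hlt⟩
        have := heq j hj
        rwa [idx_append_lt _ hj, idx_append_lt _ (h ▸ hj)] at this
    · rw [len_app, len_app, h] at hl; omega
  · rintro (hlt | ⟨rfl, hc⟩)
    · rcases hlt with ⟨i, hi1, hi2, hlt, heq⟩ | ⟨hl, heq⟩
      · refine Or.inl ⟨i, by rw [len_app]; omega, by rw [len_app]; omega, ?_, fun j hj => ?_⟩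
        · rwa [idx_append_lt _ hi1, idx_append_lt _ hi2]
        · rw [idx_append_lt _ (lt_trans hj hi1), idx_append_lt _ (lt_trans hj hi2)]
          exact heq j hj
      · rw [h] at hl; exact absurd hl (lt_irrefl _)
    · refine Or.inl ⟨u.length, by rw [len_app]; omega, by rw [len_app]; omega, ?_, fun j hj => ?_⟩
      · rw [idx_append_self, idx_append_self]; exact hc
      · rw [idx_append_lt _ hj, idx_append_lt _ hj]

lemma prec_append {u v : Word} (h : u.length = v.length) (c c' : Sig) :
    prec (u ++ [c]) (v ++ [c']) ↔
      prec u v ∨ (c = Sig.L ∧ c' = Sig.R ∧ ∀ j < u.length, Sig.le (idx u j) (idx v j)) := by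
  constructor
  · rintro ⟨i, hi1, hi2, hL, hR, hle⟩
    rw [len_app] at hi1 hi2
    rcases Nat.lt_succ_iff_lt_or_eq.1 hi1 with hi | rfl
    · rw [idx_append_lt _ hi] at hL
      rw [idx_append_lt _ (h ▸ hi)] at hR
      refine Or.inl ⟨i, hi, h ▸ hi, hL, hR, fun j hj => ?_⟩
      have := hle j hj
      rwa [idx_append_lt _ (lt_trans hj hi), idx_append_lt _ (h ▸ lt_trans hj hi)] at this
    · rw [idx_append_self] at hL
      rw [h, idx_append_self] at hR
      refine Or.inr ⟨hL, hR, fun j hj => ?_⟩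
      have := hle j hj
      rwa [idx_append_lt _ hj, idx_append_lt _ (h ▸ hj)] at this
  · rintro (⟨i, hi1, hi2, hL, hR, hle⟩ | ⟨rfl, rfl, hle⟩)
    · refine ⟨i, by rw [len_app]; omega, by rw [len_app]; omega, ?_, ?_, fun j hj => ?_⟩
      · rwa [idx_append_lt _ hi1]
      · rwa [idx_append_lt _ hi2]
      · rw [idx_append_lt _ (lt_trans hj hi1), idx_append_lt _ (lt_trans hj hi2)]
        exact hle j hj
    · refine ⟨u.length, by rw [len_app]; omega, by rw [len_app, ← h]; omega, ?_, ?_, fun j hj => ?_⟩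
      · rw [idx_append_self]
      · rw [h, idx_append_self]
      · rw [idx_append_lt _ hj, idx_append_lt _ (h ▸ hj)]
        exact hle j hj

lemma trleq_append {u v : Word} (h : u.length = v.length) (c c' : Sig) :
    trleq (u ++ [c]) (v ++ [c']) ↔ trleq u v ∧ Sig.le c c' := by
  constructor
  · intro ⟨h1, h2⟩
    refine ⟨⟨h, fun i hi => ?_⟩, ?_⟩
    · have := h2 i (by rw [len_app]; omega)
      rwa [idx_append_lt _ hi, idx_append_lt _ (h ▸ hi)] at this
    · have := h2 u.length (by rw [len_app]; omega)
      rwa [idx_append_self, h, idx_append_self] at this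
  · intro ⟨⟨h1, h2⟩, h3⟩
    refine ⟨by rw [len_app, len_app, h], fun i hi => ?_⟩
    rw [len_app] at hi
    rcases Nat.lt_succ_iff_lt_or_eq.1 hi with hi' | rfl
    · rw [idx_append_lt _ hi', idx_append_lt _ (h ▸ hi')]
      exact h2 i hi'
    · rw [idx_append_self, h, idx_append_self]
      exact h3

lemma append_letter_inj {u v : Word} (h : u.length = v.length) {c c' : Sig}
    (he : u ++ [c] = v ++ [c']) : u = v ∧ c = c' := by
  obtain ⟨h1, h2⟩ := List.append_inj he h
  exact ⟨h1, by simpa using h2⟩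

lemma cLevel_len {S : Set Word} {l : ℕ} {u : Word} (h : u ∈ cLevel S l) : u.length = l := h.2

lemma take_mem_cLevel {S : Set Word} {u : Word} (h : u ∈ segClosure S) {k : ℕ}
    (hk : k ≤ u.length) : u.take k ∈ cLevel S k := by
  obtain ⟨w, hw, hp⟩ := h
  exact ⟨⟨w, hw, (List.take_prefix k u).trans hp⟩, by rw [List.length_take]; exact min_eq_left hk⟩

lemma compatPair_of_eqs {u v : Word} (h : ∀ j < min u.length v.length, idx u j = idx v j) :
    compatPair u v := by
  constructor
  · rintro l hl ⟨h1, h2⟩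
    rw [h l hl, h2] at h1
    exact Sig.noConfusion h1
  · rintro ⟨l, hl, h1, h2⟩
    rw [h l hl, h2] at h1
    exact absurd h1 (by simp)

lemma compatible_symm {u v : Word} (h : compatible u v) : compatible v u := h.symm

lemma compatPair_of_compatible {z z' : Word} (h : compatible z z') (hle : lexLe z z') :
    compatPair z z' := by
  rcases h with ⟨_, cp⟩ | ⟨hle', cp⟩
  · exact cp
  · have : z = z' := lexLe_antisymm hle hle'
    subst this
    exact cp

lemma compatible_of_take {u v : Word}
    (h : compatible (u.take (min u.length v.length)) (v.take (min u.length v.length))) :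
    compatible u v := by
  set m := min u.length v.length with hm
  have hmu : m ≤ u.length := min_le_left _ _
  have hmv : m ≤ v.length := min_le_right _ _
  have hlu : (u.take m).length = m := by rw [List.length_take]; exact min_eq_left hmu
  have hlv : (v.take m).length = m := by rw [List.length_take]; exact min_eq_left hmv
  have hiu : ∀ j < m, idx (u.take m) j = idx u j :=
    fun j hj => idx_take hj (lt_of_lt_of_le hj hmu)
  have hiv : ∀ j < m, idx (v.take m) j = idx v j :=
    fun j hj => idx_take hj (lt_of_lt_of_le hj hmv)
  have hmin1 : min (u.take m).length (v.take m).length = m := by rw [hlu, hlv, min_self]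
  have hmin2 : min (v.take m).length (u.take m).length = m := by rw [hlu, hlv, min_self]
  have hmvu : min v.length u.length = m := by rw [min_comm]
  have cp1 : compatPair (u.take m) (v.take m) → compatPair u v := by
    rintro ⟨c1, c2⟩
    constructor
    · intro l hl
      rw [← hm] at hl
      have := c1 l (by rw [hmin1]; exact hl)
      rwa [hiu l hl, hiv l hl] at this
    · rintro ⟨l, hl, h1, h2⟩ l' hl'
      rw [← hm] at hl hl'
      have := c2 ⟨l, by rw [hmin1]; exact hl, by rwa [hiu l hl], by rwa [hiv l hl]⟩ l'
        (by rw [hmin1]; exact hl')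
      rwa [hiu l' hl', hiv l' hl'] at this
  have cp2 : compatPair (v.take m) (u.take m) → compatPair v u := by
    rintro ⟨c1, c2⟩
    constructor
    · intro l hl
      rw [hmvu] at hl
      have := c1 l (by rw [hmin2]; exact hl)
      rwa [hiu l hl, hiv l hl] at this
    · rintro ⟨l, hl, h1, h2⟩ l' hl'
      rw [hmvu] at hl hl'
      have := c2 ⟨l, by rw [hmin2]; exact hl, by rwa [hiv l hl], by rwa [hiu l hl]⟩ l'
        (by rw [hmin2]; exact hl')
      rwa [hiv l' hl', hiu l' hl'] at this
  have key : ∀ i < m, idx (u.take m) i ≠ idx (v.take m) i →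
      (lexLt (u.take m) (v.take m) → lexLt u v) ∧ (lexLt (v.take m) (u.take m) → lexLt v u) := by
    intro _ _ _
    constructor
    · rintro (⟨i, hi1, hi2, hlt, heq⟩ | ⟨hl, _⟩)
      · rw [hlu] at hi1; rw [hlv] at hi2
        refine Or.inl ⟨i, lt_of_lt_of_le hi1 hmu, lt_of_lt_of_le hi2 hmv, ?_, fun j hj => ?_⟩
        · rwa [hiu i hi1, hiv i hi2] at hlt
        · have := heq j hj
          rwa [hiu j (lt_trans hj hi1), hiv j (lt_trans hj hi1)] at this
      · rw [hlu, hlv] at hl; exact absurd hl (lt_irrefl _)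
    · rintro (⟨i, hi1, hi2, hlt, heq⟩ | ⟨hl, _⟩)
      · rw [hlv] at hi1; rw [hlu] at hi2
        refine Or.inl ⟨i, lt_of_lt_of_le hi1 hmv, lt_of_lt_of_le hi2 hmu, ?_, fun j hj => ?_⟩
        · rwa [hiv i hi1, hiu i hi2] at hlt
        · have := heq j hj
          rwa [hiv j (lt_trans hj hi1), hiu j (lt_trans hj hi1)] at this
      · rw [hlu, hlv] at hl; exact absurd hl (lt_irrefl _)
  by_cases hd : u.take m = v.take m
  · have hsame : ∀ j < m, idx u j = idx v j := by
      intro j hj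
      rw [← hiu j hj, hd, hiv j hj]
    have cpuv : compatPair u v := compatPair_of_eqs (by rw [← hm]; exact hsame)
    have cpvu : compatPair v u := compatPair_of_eqs
      (by rw [hmvu]; exact fun j hj => (hsame j hj).symm)
    rcases lexLt_trichotomy u v with hc | hc | hc
    · exact Or.inl ⟨Or.inl hc, cpuv⟩
    · exact Or.inl ⟨Or.inr hc, cpuv⟩
    · exact Or.inr ⟨Or.inl hc, cpvu⟩
  · have hdiff : ∃ i < m, idx (u.take m) i ≠ idx (v.take m) i := by
      by_contra hno
      push_neg at hno
      exact hd (word_ext (hlu.trans hlv.symm)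
        (fun i hi => hno i (by rwa [hlu] at hi)))
    obtain ⟨i0, hi0, hne0⟩ := hdiff
    obtain ⟨k1, k2⟩ := key i0 hi0 hne0
    rcases h with ⟨hle, cp⟩ | ⟨hle, cp⟩
    · rcases hle with hlt | heqt
      · exact Or.inl ⟨Or.inl (k1 hlt), cp1 cp⟩
      · exact absurd heqt hd
    · rcases hle with hlt | heqt
      · exact Or.inr ⟨Or.inl (k2 hlt), cp2 cp⟩
      · exact absurd heqt.symm hd

lemma compatible_append {z z' : Word} (hl : z.length = z'.length)
    (hle : lexLe z z') (hcp : compatPair z z') {c c' : Sig}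
    (hlec : z = z' → Sig.le c c')
    (h1 : ¬(c = Sig.R ∧ c' = Sig.L))
    (h2 : prec z z' → trleq z z' → Sig.le c c')
    (h3 : c = Sig.L → c' = Sig.R → trleq z z') :
    compatible (z ++ [c]) (z' ++ [c']) := by
  have hminz : min z.length z'.length = z.length := by rw [hl, min_self]
  have hmin : min (z ++ [c]).length (z' ++ [c']).length = z.length + 1 := by
    rw [len_app, len_app, hl, min_self]
  have hlex : lexLe (z ++ [c]) (z' ++ [c']) := by
    rcases hle with hlt | rfl
    · exact Or.inl ((lexLt_append hl c c').2 (Or.inl hlt))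
    · rcases Nat.lt_or_ge c.val c'.val with hlt | hge
      · exact Or.inl ((lexLt_append rfl c c').2 (Or.inr ⟨rfl, hlt⟩))
      · rw [sig_val_inj (Nat.le_antisymm (hlec rfl) hge)]
        exact lexLe_refl _
  left
  refine ⟨hlex, ?_, ?_⟩
  · rintro l0 hl0 ⟨ha, hb⟩
    rw [hmin] at hl0
    rcases Nat.lt_succ_iff_lt_or_eq.1 hl0 with hi | rfl
    · rw [idx_append_lt _ hi] at ha
      rw [idx_append_lt _ (hl ▸ hi)] at hb
      exact hcp.1 l0 (by rw [hminz]; exact hi) ⟨ha, hb⟩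
    · rw [idx_append_self] at ha
      rw [hl, idx_append_self] at hb
      exact h1 ⟨ha, hb⟩
  · rintro ⟨l0, hl0, ha, hb⟩ l1 hl1
    rw [hmin] at hl0 hl1
    rcases Nat.lt_succ_iff_lt_or_eq.1 hl0 with hi | rfl
    · rw [idx_append_lt _ hi] at ha
      rw [idx_append_lt _ (hl ▸ hi)] at hb
      have hall : ∀ j < z.length, Sig.le (idx z j) (idx z' j) :=
        fun j hj => hcp.2 ⟨l0, by rw [hminz]; exact hi, ha, hb⟩ j (by rw [hminz]; exact hj)
      have hprec : prec z z' := ⟨l0, hi, hl ▸ hi, ha, hb, fun j hj => hall j (lt_trans hj hi)⟩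
      have htr : trleq z z' := ⟨hl, hall⟩
      rcases Nat.lt_succ_iff_lt_or_eq.1 hl1 with hi1 | rfl
      · rw [idx_append_lt _ hi1, idx_append_lt _ (hl ▸ hi1)]
        exact hall l1 hi1
      · rw [idx_append_self, hl, idx_append_self]
        exact h2 hprec htr
    · rw [idx_append_self] at ha
      rw [hl, idx_append_self] at hb
      have htr := h3 ha hb
      rcases Nat.lt_succ_iff_lt_or_eq.1 hl1 with hi1 | rfl
      · rw [idx_append_lt _ hi1, idx_append_lt _ (hl ▸ hi1)]
        exact htr.2 l1 hi1
      · rw [idx_append_self, hl, idx_append_self, ha, hb]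
        exact sig_L_le _

noncomputable def fSplit (w z : Word) : Sig := if lexLt w z then Sig.R else Sig.X

noncomputable def fPerp (v w z : Word) : Sig :=
  if lexLt z v then Sig.X
  else if z = v then Sig.R
  else if perp z v ∧ lexLt z w then Sig.X
  else if lexLt z w then Sig.R
  else if z = w then Sig.X
  else Sig.R

noncomputable def fPrec (v w z : Word) : Sig :=
  if lexLt z v then (if perp z v then Sig.X else Sig.L)
  else if z = v then Sig.L
  else if lexLt z w then Sig.X
  else if z = w then Sig.R
  else if perp w z then Sig.X else Sig.R

lemma fSplit_le {w z : Word} (h : lexLe z w) : fSplit w z = Sig.X :=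
  if_neg (fun hc => lexLt_irrefl w (lexLt_of_lt_of_le hc h))

lemma fSplit_gt {w z : Word} (h : lexLt w z) : fSplit w z = Sig.R := if_pos h

lemma fSplit_ne_L (w z : Word) : fSplit w z ≠ Sig.L := by
  unfold fSplit; split_ifs <;> simp

lemma fPerp_ne_L (v w z : Word) : fPerp v w z ≠ Sig.L := by
  unfold fPerp; split_ifs <;> simp

lemma fPerp_region {v w : Word} (hvw : lexLt v w) (z : Word) :
    (lexLt z v ∧ fPerp v w z = Sig.X) ∨ (z = v ∧ fPerp v w z = Sig.R) ∨
    (lexLt v z ∧ lexLt z w ∧ perp z v ∧ fPerp v w z = Sig.X) ∨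
    (lexLt v z ∧ lexLt z w ∧ ¬ perp z v ∧ fPerp v w z = Sig.R) ∨
    (z = w ∧ fPerp v w z = Sig.X) ∨ (lexLt w z ∧ fPerp v w z = Sig.R) := by
  unfold fPerp
  rcases lexLt_trichotomy z v with h1 | h1 | h1
  · exact Or.inl ⟨h1, if_pos h1⟩
  · refine Or.inr (Or.inl ⟨h1, ?_⟩)
    rw [if_neg (by rw [h1]; exact lexLt_irrefl v), if_pos h1]
  · have hnz : ¬ lexLt z v := lexLt_asymm h1
    have hne : z ≠ v := fun he => lexLt_irrefl v (he ▸ h1)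
    rcases lexLt_trichotomy z w with h2 | h2 | h2
    · by_cases hp : perp z v
      · exact Or.inr (Or.inr (Or.inl ⟨h1, h2, hp,
          by rw [if_neg hnz, if_neg hne, if_pos ⟨hp, h2⟩]⟩))
      · exact Or.inr (Or.inr (Or.inr (Or.inl ⟨h1, h2, hp,
          by rw [if_neg hnz, if_neg hne, if_neg (fun hc => hp hc.1), if_pos h2]⟩)))
    · refine Or.inr (Or.inr (Or.inr (Or.inr (Or.inl ⟨h2, ?_⟩))))
      rw [if_neg hnz, if_neg hne,
        if_neg (fun hc => absurd hc.2 (by rw [h2]; exact lexLt_irrefl w)),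
        if_neg (by rw [h2]; exact lexLt_irrefl w), if_pos h2]
    · refine Or.inr (Or.inr (Or.inr (Or.inr (Or.inr ⟨h2, ?_⟩))))
      rw [if_neg hnz, if_neg hne, if_neg (fun hc => lexLt_asymm h2 hc.2),
        if_neg (lexLt_asymm h2), if_neg (fun he => absurd h2 (by rw [he]; exact lexLt_irrefl w))]

lemma fPrec_ne_cases (v w z : Word) :
    fPrec v w z = Sig.L ∨ fPrec v w z = Sig.X ∨ fPrec v w z = Sig.R := by
  unfold fPrec; split_ifs <;> simp

lemma fPrec_region {v w : Word} (hvw : lexLt v w) (z : Word) :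
    (lexLt z v ∧ perp z v ∧ fPrec v w z = Sig.X) ∨
    (lexLt z v ∧ ¬ perp z v ∧ fPrec v w z = Sig.L) ∨
    (z = v ∧ fPrec v w z = Sig.L) ∨
    (lexLt v z ∧ lexLt z w ∧ fPrec v w z = Sig.X) ∨
    (z = w ∧ fPrec v w z = Sig.R) ∨
    (lexLt w z ∧ perp w z ∧ fPrec v w z = Sig.X) ∨
    (lexLt w z ∧ ¬ perp w z ∧ fPrec v w z = Sig.R) := by
  unfold fPrec
  rcases lexLt_trichotomy z v with h1 | h1 | h1
  · by_cases hp : perp z v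
    · exact Or.inl ⟨h1, hp, by rw [if_pos h1, if_pos hp]⟩
    · exact Or.inr (Or.inl ⟨h1, hp, by rw [if_pos h1, if_neg hp]⟩)
  · refine Or.inr (Or.inr (Or.inl ⟨h1, ?_⟩))
    rw [if_neg (by rw [h1]; exact lexLt_irrefl v), if_pos h1]
  · have hnz : ¬ lexLt z v := lexLt_asymm h1
    have hne : z ≠ v := fun he => lexLt_irrefl v (he ▸ h1)
    rcases lexLt_trichotomy z w with h2 | h2 | h2
    · exact Or.inr (Or.inr (Or.inr (Or.inl ⟨h1, h2,
        by rw [if_neg hnz, if_neg hne, if_pos h2]⟩)))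
    · refine Or.inr (Or.inr (Or.inr (Or.inr (Or.inl ⟨h2, ?_⟩))))
      rw [if_neg hnz, if_neg hne, if_neg (by rw [h2]; exact lexLt_irrefl w), if_pos h2]
    · by_cases hp : perp w z
      · refine Or.inr (Or.inr (Or.inr (Or.inr (Or.inr (Or.inl ⟨h2, hp, ?_⟩)))))
        rw [if_neg hnz, if_neg hne, if_neg (lexLt_asymm h2),
          if_neg (fun he => absurd h2 (by rw [he]; exact lexLt_irrefl w)), if_pos hp]
      · refine Or.inr (Or.inr (Or.inr (Or.inr (Or.inr (Or.inr ⟨h2, hp, ?_⟩)))))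
        rw [if_neg hnz, if_neg hne, if_neg (lexLt_asymm h2),
          if_neg (fun he => absurd h2 (by rw [he]; exact lexLt_irrefl w)), if_neg hp]

lemma bijOn_append {S : Set Word} {l : ℕ} {f : Word → Sig}
    (hcl : cLevel S (l+1) = (fun z => z ++ [f z]) '' cLevel S l) :
    Set.BijOn (fun z => z ++ [f z]) (cLevel S l) (cLevel S (l+1)) := by
  rw [hcl]
  exact ⟨Set.mapsTo_image _ _,
    fun a ha b hb he => (append_letter_inj (ha.2.trans hb.2.symm) he).1,
    Set.surjOn_image _ _⟩

lemma lexLe_append_iff {u v : Word} (h : u.length = v.length) {c c' : Sig}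
    (heqc : u = v → c = c') :
    lexLe u v ↔ lexLe (u ++ [c]) (v ++ [c']) := by
  constructor
  · rintro (hlt | rfl)
    · exact Or.inl ((lexLt_append h c c').2 (Or.inl hlt))
    · rw [heqc rfl]; exact lexLe_refl _
  · rintro (hlt | he)
    · rcases (lexLt_append h c c').1 hlt with h' | ⟨rfl, hcc⟩
      · exact Or.inl h'
      · rw [heqc rfl] at hcc; exact absurd hcc (lt_irrefl _)
    · exact Or.inr (append_letter_inj h he).1

lemma preceq_append_iff {u v : Word} (h : u.length = v.length) {c c' : Sig}
    (hc : c ≠ Sig.L) (heqc : u = v → c = c') :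
    preceq (u ++ [c]) (v ++ [c']) ↔ preceq u v := by
  constructor
  · rintro (hp | he)
    · rcases (prec_append h c c').1 hp with h' | ⟨hL, _⟩
      · exact Or.inl h'
      · exact absurd hL hc
    · exact Or.inr (append_letter_inj h he).1
  · rintro (hp | rfl)
    · exact Or.inl ((prec_append h c c').2 (Or.inl hp))
    · rw [heqc rfl]; exact Or.inr rfl

lemma trleq_append_iff {u v : Word} (h : u.length = v.length) {c c' : Sig}
    (hmono : trleq u v → Sig.le c c') :
    trleq (u ++ [c]) (v ++ [c']) ↔ trleq u v := by
  rw [trleq_append h c c']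
  exact ⟨fun hx => hx.1, fun hx => ⟨hx, hmono hx⟩⟩

lemma perp_comm {u v : Word} (h : perp u v) : perp v u := ⟨h.2, h.1⟩

lemma fSplit_mono {w z z' : Word} (ht : trleq z z') :
    Sig.le (fSplit w z) (fSplit w z') := by
  by_cases h : lexLt w z'
  · rw [fSplit_gt h]; exact sig_le_R _
  · have h2 : ¬ lexLt w z := fun hc => h (lexLt_of_lt_of_le hc (trleq_lexLe ht))
    unfold fSplit
    rw [if_neg h, if_neg h2]
    exact sig_le_refl _

lemma fPerp_mono {S : Set Word} {l : ℕ} {v w : Word} (h : NewPerpLevelAt S l v w)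
    {z z' : Word} (hz : z ∈ cLevel S l)
    (ht : trleq z z') (hne : ¬(z = v ∧ z' = w)) :
    Sig.le (fPerp v w z) (fPerp v w z') := by
  obtain ⟨hv, hw, hvw, hnrel, hcond, _⟩ := h
  rcases eq_or_ne z z' with rfl | hnz
  · exact sig_le_refl _
  have hlt : lexLt z z' := (trleq_lexLe ht).resolve_right hnz
  rcases fPerp_region hvw z with ⟨hA, hfA⟩|⟨hA, hfA⟩|⟨hA1, hA2, hA3, hfA⟩|⟨hA1, hA2, hA3, hfA⟩|⟨hA, hfA⟩|⟨hA, hfA⟩ <;>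
    rcases fPerp_region hvw z' with ⟨hB, hfB⟩|⟨hB, hfB⟩|⟨hB1, hB2, hB3, hfB⟩|⟨hB1, hB2, hB3, hfB⟩|⟨hB, hfB⟩|⟨hB, hfB⟩ <;>
    rw [hfA, hfB] <;> try exact sig_le_refl _
  all_goals try exact sig_le_R _
  -- (2,1)
  · exfalso; rw [hA] at hlt; exact lexLt_asymm hlt hB
  -- (2,3)
  · exfalso; rw [hA] at ht; exact hB3.2 ht
  -- (2,5)
  · exact absurd ⟨hA, hB⟩ hne
  -- (4,1)
  · exfalso; exact lexLt_asymm hA1 (lexLt_trans hlt hB)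
  -- (4,3)
  · exfalso
    have htv : trleq v z := trleq_of_lexLt_not_perp hA1 (fun hp => hA3 (perp_comm hp))
    exact hB3.2 (trleq_trans htv ht)
  -- (4,5)
  · exfalso
    rcases hcond z hz hA1 hA2 with hp | hp
    · exact hA3 hp
    · rw [hB] at ht; exact hp.1 ht
  -- (6,1)
  · exfalso; exact lexLt_asymm (lexLt_trans hvw hA) (lexLt_trans hlt hB)
  -- (6,3)
  · exfalso; exact lexLt_asymm (lexLt_trans hA hlt) hB2
  -- (6,5)
  · exfalso; rw [hB] at hlt; exact lexLt_asymm hA hlt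

lemma fPrec_mono {S : Set Word} {l : ℕ} {v w : Word} (h : NewPrecLevelAt S l v w)
    {z z' : Word} (ht : trleq z z') :
    Sig.le (fPrec v w z) (fPrec v w z') := by
  obtain ⟨hv, hw, hvw, hnrel, hc5, hc6, _⟩ := h
  rcases eq_or_ne z z' with rfl | hnz
  · exact sig_le_refl _
  have hlt : lexLt z z' := (trleq_lexLe ht).resolve_right hnz
  rcases fPrec_region hvw z with ⟨hA1, hA2, hfA⟩|⟨hA1, hA2, hfA⟩|⟨hA, hfA⟩|⟨hA1, hA2, hfA⟩|⟨hA, hfA⟩|⟨hA1, hA2, hfA⟩|⟨hA1, hA2, hfA⟩ <;>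
    rcases fPrec_region hvw z' with ⟨hB1, hB2, hfB⟩|⟨hB1, hB2, hfB⟩|⟨hB, hfB⟩|⟨hB1, hB2, hfB⟩|⟨hB, hfB⟩|⟨hB1, hB2, hfB⟩|⟨hB1, hB2, hfB⟩ <;>
    rw [hfA, hfB] <;> try exact sig_le_refl _
  all_goals try exact sig_L_le _
  all_goals try exact sig_le_R _
  all_goals exfalso
  -- (1,2)
  · exact hA2.1 (trleq_trans ht (trleq_of_lexLt_not_perp hB1 hB2))
  -- (1,3)
  · rw [hB] at ht; exact hA2.1 ht
  -- (4,2)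
  · exact lexLt_asymm hA1 (lexLt_trans hlt hB1)
  -- (4,3)
  · rw [hB] at hlt; exact lexLt_asymm hA1 hlt
  -- (5,1)
  · rw [hA] at hlt; exact lexLt_asymm hlt (lexLt_trans hB1 hvw)
  -- (5,2)
  · rw [hA] at hlt; exact lexLt_asymm hlt (lexLt_trans hB1 hvw)
  -- (5,3)
  · rw [hA] at hlt; rw [hB] at hlt; exact lexLt_asymm hvw hlt
  -- (5,4)
  · rw [hA] at hlt; exact lexLt_asymm hlt hB2
  -- (5,6)
  · rw [hA] at ht; exact hB2.1 ht
  -- (6,2)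
  · exact lexLt_asymm (lexLt_trans hvw hA1) (lexLt_trans hlt hB1)
  -- (6,3)
  · rw [hB] at hlt; exact lexLt_asymm (lexLt_trans hvw hA1) hlt
  -- (7,1)
  · exact lexLt_asymm (lexLt_trans hvw hA1) (lexLt_trans hlt hB1)
  -- (7,2)
  · exact lexLt_asymm (lexLt_trans hvw hA1) (lexLt_trans hlt hB1)
  -- (7,3)
  · rw [hB] at hlt; exact lexLt_asymm (lexLt_trans hvw hA1) hlt
  -- (7,4)
  · exact lexLt_asymm (lexLt_trans hA1 hlt) hB2
  -- (7,6)
  · exact hB2.1 (trleq_trans (trleq_of_lexLt_not_perp hA1 hA2) ht)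

lemma fPerp_eval1 {v w z : Word} (h : lexLt z v) : fPerp v w z = Sig.X := if_pos h

lemma fPerp_eval2 {v w : Word} : fPerp v w v = Sig.R := by
  unfold fPerp
  rw [if_neg (lexLt_irrefl v), if_pos rfl]

lemma fPerp_eval3 {v w z : Word} (h1 : lexLt v z) (h2 : lexLt z w) (h3 : perp z v) :
    fPerp v w z = Sig.X := by
  unfold fPerp
  rw [if_neg (lexLt_asymm h1), if_neg (fun he => absurd h1 (by rw [he]; exact lexLt_irrefl v)),
    if_pos ⟨h3, h2⟩]

lemma fPerp_eval4 {v w z : Word} (h1 : lexLt v z) (h2 : lexLt z w) (h3 : ¬ perp z v) :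
    fPerp v w z = Sig.R := by
  unfold fPerp
  rw [if_neg (lexLt_asymm h1), if_neg (fun he => absurd h1 (by rw [he]; exact lexLt_irrefl v)),
    if_neg (fun hc => h3 hc.1), if_pos h2]

lemma fPerp_eval5 {v w : Word} (hvw : lexLt v w) : fPerp v w w = Sig.X := by
  unfold fPerp
  rw [if_neg (lexLt_asymm hvw), if_neg (fun he => absurd hvw (by rw [he]; exact lexLt_irrefl v)),
    if_neg (fun hc => lexLt_irrefl w hc.2), if_neg (lexLt_irrefl w), if_pos rfl]

lemma fPerp_eval6 {v w z : Word} (hvw : lexLt v w) (h : lexLt w z) : fPerp v w z = Sig.R := by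
  have hvz : lexLt v z := lexLt_trans hvw h
  unfold fPerp
  rw [if_neg (lexLt_asymm hvz), if_neg (fun he => absurd hvz (by rw [he]; exact lexLt_irrefl v)),
    if_neg (fun hc => lexLt_asymm h hc.2), if_neg (lexLt_asymm h),
    if_neg (fun he => absurd h (by rw [he]; exact lexLt_irrefl w))]

lemma fPrec_eval1 {v w z : Word} (h1 : lexLt z v) (h2 : perp z v) : fPrec v w z = Sig.X := by
  unfold fPrec
  rw [if_pos h1, if_pos h2]

lemma fPrec_eval2 {v w z : Word} (h1 : lexLt z v) (h2 : ¬ perp z v) : fPrec v w z = Sig.L := by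
  unfold fPrec
  rw [if_pos h1, if_neg h2]

lemma fPrec_eval3 {v w : Word} : fPrec v w v = Sig.L := by
  unfold fPrec
  rw [if_neg (lexLt_irrefl v), if_pos rfl]

lemma fPrec_eval4 {v w z : Word} (h1 : lexLt v z) (h2 : lexLt z w) : fPrec v w z = Sig.X := by
  unfold fPrec
  rw [if_neg (lexLt_asymm h1), if_neg (fun he => absurd h1 (by rw [he]; exact lexLt_irrefl v)),
    if_pos h2]

lemma fPrec_eval5 {v w : Word} (hvw : lexLt v w) : fPrec v w w = Sig.R := by
  unfold fPrec
  rw [if_neg (lexLt_asymm hvw), if_neg (fun he => absurd hvw (by rw [he]; exact lexLt_irrefl v)),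
    if_neg (lexLt_irrefl w), if_pos rfl]

lemma fPrec_eval6 {v w z : Word} (hvw : lexLt v w) (h1 : lexLt w z) (h2 : perp w z) :
    fPrec v w z = Sig.X := by
  have hvz : lexLt v z := lexLt_trans hvw h1
  unfold fPrec
  rw [if_neg (lexLt_asymm hvz), if_neg (fun he => absurd hvz (by rw [he]; exact lexLt_irrefl v)),
    if_neg (lexLt_asymm h1), if_neg (fun he => absurd h1 (by rw [he]; exact lexLt_irrefl w)),
    if_pos h2]

lemma fPrec_eval7 {v w z : Word} (hvw : lexLt v w) (h1 : lexLt w z) (h2 : ¬ perp w z) :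
    fPrec v w z = Sig.R := by
  have hvz : lexLt v z := lexLt_trans hvw h1
  unfold fPrec
  rw [if_neg (lexLt_asymm hvz), if_neg (fun he => absurd hvz (by rw [he]; exact lexLt_irrefl v)),
    if_neg (lexLt_asymm h1), if_neg (fun he => absurd h1 (by rw [he]; exact lexLt_irrefl w)),
    if_neg h2]

lemma leaf_classify {S : Set Word} {l : ℕ} {w : Word} (h : LeafLevelAt S l w) :
    cLevel S (l+1) = (fun z => z ++ [Sig.X]) '' (cLevel S l \ {w}) := by
  rw [h.2.2]; rfl

lemma split_classify {S : Set Word} {l : ℕ} {w : Word} (h : SplitLevelAt S l w) :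
    cLevel S (l+1) \ {w ++ [Sig.R]} = (fun z => z ++ [fSplit w z]) '' cLevel S l := by
  obtain ⟨hw, heq⟩ := h
  ext u
  simp only [heq, Set.mem_diff, Set.mem_union, Set.mem_image, Set.mem_setOf_eq,
    Set.mem_insert_iff, Set.mem_singleton_iff, Set.mem_sep_iff]
  constructor
  · rintro ⟨(⟨z, ⟨hz, h1⟩, rfl⟩ | (rfl | rfl)) | ⟨z, ⟨hz, h1⟩, rfl⟩, hne⟩
    · exact ⟨z, hz, by rw [fSplit_le (Or.inl h1)]⟩
    · exact ⟨w, hw, by rw [fSplit_le (lexLe_refl w)]⟩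
    · exact absurd rfl hne
    · exact ⟨z, hz, by rw [fSplit_gt h1]⟩
  · rintro ⟨z, hz, rfl⟩
    rcases lexLt_trichotomy z w with h1 | rfl | h1
    · refine ⟨Or.inl (Or.inl ⟨z, ⟨hz, h1⟩, by rw [fSplit_le (Or.inl h1)]⟩), ?_⟩
      rw [fSplit_le (Or.inl h1)]
      intro he
      have := (append_letter_inj (hz.2.trans hw.2.symm) he).2
      simp at this
    · refine ⟨Or.inl (Or.inr (Or.inl (by rw [fSplit_le (lexLe_refl z)]))), ?_⟩
      rw [fSplit_le (lexLe_refl z)]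
      intro he
      have := (append_letter_inj rfl he).2
      simp at this
    · refine ⟨Or.inr ⟨z, ⟨hz, h1⟩, by rw [fSplit_gt h1]⟩, ?_⟩
      rw [fSplit_gt h1]
      intro he
      have hzw := (append_letter_inj (hz.2.trans hw.2.symm) he).1
      rw [hzw] at h1
      exact lexLt_irrefl w h1

lemma perp_classify {S : Set Word} {l : ℕ} {v w : Word} (h : NewPerpLevelAt S l v w) :
    cLevel S (l+1) = (fun z => z ++ [fPerp v w z]) '' cLevel S l := by
  obtain ⟨hv, hw, hvw, hnrel, hcond, heq⟩ := h
  rw [heq]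
  ext u
  simp only [appendSet, Set.mem_union, Set.mem_image, Set.mem_setOf_eq,
    Set.mem_singleton_iff, Set.mem_sep_iff]
  constructor
  · rintro (((((⟨z, ⟨hz, h1⟩, rfl⟩ | rfl) | ⟨z, ⟨hz, h1, h2, h3⟩, rfl⟩) | ⟨z, ⟨hz, h1, h2, h3⟩, rfl⟩) | rfl) | ⟨z, ⟨hz, h1⟩, rfl⟩)
    · exact ⟨z, hz, by rw [fPerp_eval1 h1]⟩
    · exact ⟨v, hv, by rw [fPerp_eval2]⟩
    · exact ⟨z, hz, by rw [fPerp_eval3 h1 h2 h3]⟩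
    · exact ⟨z, hz, by rw [fPerp_eval4 h1 h2 h3]⟩
    · exact ⟨w, hw, by rw [fPerp_eval5 hvw]⟩
    · exact ⟨z, hz, by rw [fPerp_eval6 hvw h1]⟩
  · rintro ⟨z, hz, rfl⟩
    rcases lexLt_trichotomy z v with h1 | rfl | h1
    · exact Or.inl (Or.inl (Or.inl (Or.inl (Or.inl ⟨z, ⟨hz, h1⟩, by rw [fPerp_eval1 h1]⟩))))
    · exact Or.inl (Or.inl (Or.inl (Or.inl (Or.inr (by rw [fPerp_eval2])))))
    · rcases lexLt_trichotomy z w with h2 | rfl | h2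
      · by_cases hp : perp z v
        · exact Or.inl (Or.inl (Or.inl (Or.inr ⟨z, ⟨hz, h1, h2, hp⟩, by rw [fPerp_eval3 h1 h2 hp]⟩)))
        · exact Or.inl (Or.inl (Or.inr ⟨z, ⟨hz, h1, h2, hp⟩, by rw [fPerp_eval4 h1 h2 hp]⟩))
      · exact Or.inl (Or.inr (by rw [fPerp_eval5 hvw]))
      · exact Or.inr ⟨z, ⟨hz, h2⟩, by rw [fPerp_eval6 hvw h2]⟩

lemma prec_classify {S : Set Word} {l : ℕ} {v w : Word} (h : NewPrecLevelAt S l v w) :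
    cLevel S (l+1) = (fun z => z ++ [fPrec v w z]) '' cLevel S l := by
  obtain ⟨hv, hw, hvw, hnrel, hc5, hc6, heq⟩ := h
  rw [heq]
  ext u
  simp only [appendSet, Set.mem_union, Set.mem_image, Set.mem_setOf_eq,
    Set.mem_singleton_iff, Set.mem_sep_iff]
  constructor
  · rintro ((((((⟨z, ⟨hz, h1, h2⟩, rfl⟩ | ⟨z, ⟨hz, h1, h2⟩, rfl⟩) | rfl) | ⟨z, ⟨hz, h1, h2⟩, rfl⟩) | rfl) | ⟨z, ⟨hz, h1, h2⟩, rfl⟩) | ⟨z, ⟨hz, h1, h2⟩, rfl⟩)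
    · exact ⟨z, hz, by rw [fPrec_eval1 h1 h2]⟩
    · exact ⟨z, hz, by rw [fPrec_eval2 h1 h2]⟩
    · exact ⟨v, hv, by rw [fPrec_eval3]⟩
    · exact ⟨z, hz, by rw [fPrec_eval4 h1 h2]⟩
    · exact ⟨w, hw, by rw [fPrec_eval5 hvw]⟩
    · exact ⟨z, hz, by rw [fPrec_eval6 hvw h1 h2]⟩
    · exact ⟨z, hz, by rw [fPrec_eval7 hvw h1 h2]⟩
  · rintro ⟨z, hz, rfl⟩
    rcases lexLt_trichotomy z v with h1 | rfl | h1
    · by_cases hp : perp z v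
      · exact Or.inl (Or.inl (Or.inl (Or.inl (Or.inl (Or.inl ⟨z, ⟨hz, h1, hp⟩, by rw [fPrec_eval1 h1 hp]⟩)))))
      · exact Or.inl (Or.inl (Or.inl (Or.inl (Or.inl (Or.inr ⟨z, ⟨hz, h1, hp⟩, by rw [fPrec_eval2 h1 hp]⟩)))))
    · exact Or.inl (Or.inl (Or.inl (Or.inl (Or.inr (by rw [fPrec_eval3])))))
    · rcases lexLt_trichotomy z w with h2 | rfl | h2
      · exact Or.inl (Or.inl (Or.inl (Or.inr ⟨z, ⟨hz, h1, h2⟩, by rw [fPrec_eval4 h1 h2]⟩)))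
      · exact Or.inl (Or.inl (Or.inr (by rw [fPrec_eval5 hvw])))
      · by_cases hp : perp w z
        · exact Or.inl (Or.inr ⟨z, ⟨hz, h2, hp⟩, by rw [fPrec_eval6 hvw h2 hp]⟩)
        · exact Or.inr ⟨z, ⟨hz, h2, hp⟩, by rw [fPrec_eval7 hvw h2 hp]⟩

lemma prec_irrefl (u : Word) : ¬ prec u u := by
  rintro ⟨i, _, _, h1, h2, _⟩
  rw [h1] at h2
  exact Sig.noConfusion h2

lemma leaf_main {S : Set Word} {l : ℕ} {w : Word} (h : LeafLevelAt S l w) :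
    LevelIso (cLevel S l \ {w}) (cLevel S (l+1)) := by
  refine ⟨fun z => z ++ [Sig.X], ?_, ?_⟩
  · rw [leaf_classify h]
    exact ⟨Set.mapsTo_image _ _,
      fun a ha b hb he => (append_letter_inj (ha.1.2.trans hb.1.2.symm) he).1,
      Set.surjOn_image _ _⟩
  · intro u hu v hv
    have hl : u.length = v.length := hu.1.2.trans hv.1.2.symm
    exact ⟨(preceq_append_iff hl (by simp) (fun _ => rfl)).symm,
      (trleq_append_iff hl (fun _ => sig_le_refl _)).symm,
      lexLe_append_iff hl (fun _ => rfl)⟩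

lemma split_main {S : Set Word} {l : ℕ} (h : SplitLevel S l) :
    ∃ v' v'', v' ∈ cLevel S (l + 1) ∧ v'' ∈ cLevel S (l + 1) ∧
      lexLt v' v'' ∧ ¬ preceq v' v'' ∧ ¬ preceq v'' v' ∧ trleq v' v'' ∧
      LevelIso (cLevel S l) (cLevel S (l + 1) \ {v''}) ∧
      (∀ u ∈ cLevel S (l + 1), u ≠ v' → u ≠ v'' →
        (preceq u v' ↔ preceq u v'') ∧ (preceq v' u ↔ preceq v'' u) ∧
        (trleq u v' ↔ trleq u v'') ∧ (trleq v' u ↔ trleq v'' u)) := by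
  obtain ⟨w, hsp⟩ := h
  have hcl := split_classify hsp
  obtain ⟨hw, heq⟩ := hsp
  have hv'mem : w ++ [Sig.X] ∈ cLevel S (l+1) := by
    rw [heq]
    simp only [Set.mem_union, Set.mem_insert_iff, Set.mem_singleton_iff]
    tauto
  have hv''mem : w ++ [Sig.R] ∈ cLevel S (l+1) := by
    rw [heq]
    simp only [Set.mem_union, Set.mem_insert_iff, Set.mem_singleton_iff]
    tauto
  refine ⟨w ++ [Sig.X], w ++ [Sig.R], hv'mem, hv''mem, ?_, ?_, ?_, ?_, ?_, ?_⟩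
  · exact (lexLt_append rfl _ _).2 (Or.inr ⟨rfl, by simp [Sig.lt, Sig.val]⟩)
  · rintro (hp | he)
    · rcases (prec_append rfl _ _).1 hp with h' | ⟨hL, _⟩
      · exact prec_irrefl w h'
      · exact Sig.noConfusion hL
    · exact absurd (append_letter_inj rfl he).2 (by simp)
  · rintro (hp | he)
    · rcases (prec_append rfl _ _).1 hp with h' | ⟨hL, _⟩
      · exact prec_irrefl w h'
      · exact Sig.noConfusion hL
    · exact absurd (append_letter_inj rfl he).2 (by simp)
  · exact (trleq_append rfl _ _).2 ⟨trleq_refl w, by simp [Sig.le, Sig.val]⟩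
  · refine ⟨fun z => z ++ [fSplit w z], ?_, ?_⟩
    · rw [hcl]
      exact ⟨Set.mapsTo_image _ _,
        fun a ha b hb he' => (append_letter_inj (ha.2.trans hb.2.symm) he').1,
        Set.surjOn_image _ _⟩
    · intro a ha b hb
      have hlab : a.length = b.length := ha.2.trans hb.2.symm
      exact ⟨(preceq_append_iff hlab (fSplit_ne_L w a) (fun he' => by rw [he'])).symm,
        (trleq_append_iff hlab fSplit_mono).symm,
        lexLe_append_iff hlab (fun he' => by rw [he'])⟩
  · intro u hu hne' hne''
    have humem : u ∈ (fun z => z ++ [fSplit w z]) '' cLevel S l := by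
      rw [← hcl]; exact ⟨hu, hne''⟩
    obtain ⟨z, hz, rfl⟩ := humem
    simp only [] at hne' ⊢
    have hlzw : z.length = w.length := hz.2.trans hw.2.symm
    have hzw : z ≠ w := by
      rintro rfl
      exact hne' (by rw [fSplit_le (lexLe_refl z)])
    have k1 : ∀ c' : Sig, preceq (z ++ [fSplit w z]) (w ++ [c']) ↔ prec z w := by
      intro c'
      constructor
      · rintro (hp | he)
        · rcases (prec_append hlzw _ _).1 hp with h' | ⟨hL, _⟩
          · exact h'
          · exact absurd hL (fSplit_ne_L w z)
        · exact absurd (append_letter_inj hlzw he).1 hzw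
      · intro hp
        exact Or.inl ((prec_append hlzw _ _).2 (Or.inl hp))
    have k2 : ∀ c' : Sig, c' ≠ Sig.L →
        (preceq (w ++ [c']) (z ++ [fSplit w z]) ↔ prec w z) := by
      intro c' hc'
      constructor
      · rintro (hp | he)
        · rcases (prec_append hlzw.symm _ _).1 hp with h' | ⟨hL, _⟩
          · exact h'
          · exact absurd hL hc'
        · exact absurd (append_letter_inj hlzw.symm he).1 (Ne.symm hzw)
      · intro hp
        exact Or.inl ((prec_append hlzw.symm _ _).2 (Or.inl hp))
    refine ⟨(k1 Sig.X).trans (k1 Sig.R).symm,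
      (k2 Sig.X (by simp)).trans (k2 Sig.R (by simp)).symm, ?_, ?_⟩
    · rw [trleq_append hlzw, trleq_append hlzw]
      constructor
      · rintro ⟨ht, _⟩
        exact ⟨ht, sig_le_R _⟩
      · rintro ⟨ht, _⟩
        rw [fSplit_le (trleq_lexLe ht)]
        exact ⟨ht, sig_le_refl _⟩
    · rw [trleq_append hlzw.symm, trleq_append hlzw.symm]
      constructor
      · rintro ⟨ht, _⟩
        rw [fSplit_gt ((trleq_lexLe ht).resolve_right (fun he => hzw he.symm))]
        exact ⟨ht, sig_le_refl _⟩
      · rintro ⟨ht, _⟩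
        exact ⟨ht, sig_X_le (fSplit_ne_L w z)⟩

lemma perp_main {S : Set Word} {l : ℕ} (h : NewPerpLevel S l) :
    ∃ e : Word → Word, Set.BijOn e (cLevel S l) (cLevel S (l + 1)) ∧
      (∀ u ∈ cLevel S l, ∀ v ∈ cLevel S l,
        (lexLe u v ↔ lexLe (e u) (e v)) ∧ (preceq u v ↔ preceq (e u) (e v))) ∧
      ∃ a ∈ cLevel S l, ∃ b ∈ cLevel S l,
        trleq a b ∧ ¬ trleq (e a) (e b) ∧ perp (e a) (e b) ∧
        ∀ u ∈ cLevel S l, ∀ v ∈ cLevel S l, ¬ (u = a ∧ v = b) →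
          (trleq u v ↔ trleq (e u) (e v)) := by
  obtain ⟨v, w, hp⟩ := h
  have hcl := perp_classify hp
  obtain ⟨hv, hw, hvw, hnrel, hcond, heq⟩ := hp
  have hp' : NewPerpLevelAt S l v w := ⟨hv, hw, hvw, hnrel, hcond, heq⟩
  have hlvw : v.length = w.length := hv.2.trans hw.2.symm
  have hnt : ¬ trleq (v ++ [fPerp v w v]) (w ++ [fPerp v w w]) := by
    rw [fPerp_eval2, fPerp_eval5 hvw]
    intro ht
    have h2 := ((trleq_append hlvw _ _).1 ht).2
    simp [Sig.le, Sig.val] at h2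
  refine ⟨fun z => z ++ [fPerp v w z], bijOn_append hcl, ?_, v, hv, w, hw,
    unrel_trleq hvw hnrel, hnt, ⟨hnt, ?_⟩, ?_⟩
  · intro a ha b hb
    have hlab : a.length = b.length := ha.2.trans hb.2.symm
    exact ⟨lexLe_append_iff hlab (fun he => by rw [he]),
      (preceq_append_iff hlab (fPerp_ne_L v w a) (fun he => by rw [he])).symm⟩
  · simp only []
    rw [fPerp_eval2, fPerp_eval5 hvw]
    intro ht
    exact not_trleq_of_lexLt hvw ((trleq_append hlvw.symm _ _).1 ht).1
  · intro a ha b hb hne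
    have hlab : a.length = b.length := ha.2.trans hb.2.symm
    exact (trleq_append_iff hlab
      (fun ht => fPerp_mono hp' ha ht (fun hab => hne ⟨hab.1, hab.2⟩))).symm

lemma fPrec_RL {v w : Word} (hvw : lexLt v w) {a b : Word} (hle : lexLe a b) :
    ¬ (fPrec v w a = Sig.R ∧ fPrec v w b = Sig.L) := by
  rintro ⟨hRa, hLb⟩
  have hwa : lexLe w a := by
    rcases fPrec_region hvw a with ⟨_,_,hf⟩|⟨_,_,hf⟩|⟨_,hf⟩|⟨_,_,hf⟩|⟨hA,hf⟩|⟨_,_,hf⟩|⟨hA1,_,hf⟩ <;>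
      rw [hf] at hRa
    all_goals try exact Sig.noConfusion hRa
    · exact Or.inr hA.symm
    · exact Or.inl hA1
  have hbv : lexLe b v := by
    rcases fPrec_region hvw b with ⟨hB1,_,hf⟩|⟨hB1,_,hf⟩|⟨hB,hf⟩|⟨_,_,hf⟩|⟨_,hf⟩|⟨_,_,hf⟩|⟨_,_,hf⟩ <;>
      rw [hf] at hLb
    all_goals try exact Sig.noConfusion hLb
    · exact Or.inl hB1
    · exact Or.inr hB
  exact lexLt_irrefl w (lexLt_of_le_of_lt (lexLe_trans hwa (lexLe_trans hle hbv)) hvw)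

lemma fPrec_L_reg {v w : Word} (hvw : lexLt v w) {a : Word} (hL : fPrec v w a = Sig.L) :
    (lexLt a v ∧ ¬ perp a v) ∨ a = v := by
  rcases fPrec_region hvw a with ⟨_,_,hf⟩|⟨hA1,hA2,hf⟩|⟨hA,hf⟩|⟨_,_,hf⟩|⟨_,hf⟩|⟨_,_,hf⟩|⟨_,_,hf⟩ <;>
    rw [hf] at hL
  all_goals try exact Sig.noConfusion hL
  · exact Or.inl ⟨hA1, hA2⟩
  · exact Or.inr hA

lemma fPrec_R_reg {v w : Word} (hvw : lexLt v w) {b : Word} (hR : fPrec v w b = Sig.R) :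
    b = w ∨ (lexLt w b ∧ ¬ perp w b) := by
  rcases fPrec_region hvw b with ⟨_,_,hf⟩|⟨_,_,hf⟩|⟨_,hf⟩|⟨_,_,hf⟩|⟨hB,hf⟩|⟨_,_,hf⟩|⟨hB1,hB2,hf⟩ <;>
    rw [hf] at hR
  all_goals try exact Sig.noConfusion hR
  · exact Or.inl hB
  · exact Or.inr ⟨hB1, hB2⟩

lemma fPrec_LR_trleq {v w : Word} (hvw : lexLt v w) (hnrel : ¬ related v w) {a b : Word}
    (hL : fPrec v w a = Sig.L) (hR : fPrec v w b = Sig.R) : trleq a b := by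
  have hav : trleq a v := by
    rcases fPrec_L_reg hvw hL with ⟨h1, h2⟩ | rfl
    · exact trleq_of_lexLt_not_perp h1 h2
    · exact trleq_refl _
  have hwb : trleq w b := by
    rcases fPrec_R_reg hvw hR with rfl | ⟨h1, h2⟩
    · exact trleq_refl _
    · exact trleq_of_lexLt_not_perp h1 h2
  exact trleq_trans hav (trleq_trans (unrel_trleq hvw hnrel) hwb)

lemma prec_main {S : Set Word} {l : ℕ} (h : NewPrecLevel S l) :
    ∃ e : Word → Word, Set.BijOn e (cLevel S l) (cLevel S (l + 1)) ∧
      (∀ u ∈ cLevel S l, ∀ v ∈ cLevel S l,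
        (lexLe u v ↔ lexLe (e u) (e v)) ∧ (trleq u v ↔ trleq (e u) (e v)) ∧
        (perp (e u) (e v) → perp u v)) ∧
      ∃ a ∈ cLevel S l, ∃ b ∈ cLevel S l,
        ¬ preceq a b ∧ prec (e a) (e b) ∧
        ∀ u ∈ cLevel S l, ∀ v ∈ cLevel S l, ¬ (u = a ∧ v = b) →
          (preceq u v ↔ preceq (e u) (e v)) := by
  obtain ⟨v, w, hp⟩ := h
  have hcl := prec_classify hp
  obtain ⟨hv, hw, hvw, hnrel, hc5, hc6, heq⟩ := hp
  have hp' : NewPrecLevelAt S l v w := ⟨hv, hw, hvw, hnrel, hc5, hc6, heq⟩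
  have hlvw : v.length = w.length := hv.2.trans hw.2.symm
  refine ⟨fun z => z ++ [fPrec v w z], bijOn_append hcl, ?_, v, hv, w, hw,
    fun hc => hnrel (Or.inl hc), ?_, ?_⟩
  · intro a ha b hb
    have hlab : a.length = b.length := ha.2.trans hb.2.symm
    have htiff := (trleq_append_iff hlab (fun ht => fPrec_mono hp' ht)).symm
    have htiff' := (trleq_append_iff hlab.symm (fun ht => fPrec_mono hp' ht)).symm
    refine ⟨lexLe_append_iff hlab (fun he => by rw [he]), htiff, ?_⟩
    rintro ⟨h1, h2⟩
    exact ⟨fun ht => h1 (htiff.1 ht), fun ht => h2 (htiff'.1 ht)⟩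
  · simp only []
    rw [fPrec_eval3, fPrec_eval5 hvw]
    exact (prec_append hlvw _ _).2 (Or.inr ⟨rfl, rfl, (unrel_trleq hvw hnrel).2⟩)
  · intro a ha b hb hne
    have hlab : a.length = b.length := ha.2.trans hb.2.symm
    constructor
    · rintro (hpr | rfl)
      · exact Or.inl ((prec_append hlab _ _).2 (Or.inl hpr))
      · exact Or.inr rfl
    · rintro (hpr | he)
      · rcases (prec_append hlab _ _).1 hpr with h' | ⟨hL, hR, hall⟩
        · exact Or.inl h'
        · rcases fPrec_L_reg hvw hL with ⟨hA1, hA2⟩ | rfl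
          · have hpaw : preceq a w := (hc5 a ha hA1).resolve_right hA2
            rcases fPrec_R_reg hvw hR with rfl | ⟨hB1, hB2⟩
            · exact hpaw
            · have hprecaw : prec a w := by
                rcases hpaw with hx | hx
                · exact hx
                · rw [hx] at hA1
                  exact absurd hA1 (lexLt_asymm hvw)
              obtain ⟨i, hi1, hi2, hiL, hiR, hmin⟩ := hprecaw
              have htwb : trleq w b := trleq_of_lexLt_not_perp hB1 hB2
              have hbR : idx b i = Sig.R := by
                have hx := htwb.2 i hi2
                rw [hiR] at hx
                exact sig_R_le hx
              exact Or.inl ⟨i, hi1, by rw [← hlab]; exact hi1, hiL, hbR,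
                fun j hj => hall j (lt_trans hj hi1)⟩
          · rcases fPrec_R_reg hvw hR with rfl | ⟨hB1, hB2⟩
            · exact absurd ⟨rfl, rfl⟩ hne
            · exact (hc6 b hb hB1).resolve_right hB2
      · exact Or.inr (append_letter_inj hlab he).1

lemma compat_level_gen {S : Set Word} {lp : ℕ} {A : Set Word} {g : Word → Sig → Prop}
    (hsur : ∀ u ∈ cLevel S lp, ∃ z ∈ A, ∃ c, g z c ∧ u = z ++ [c])
    (hlen : ∀ a ∈ A, ∀ b ∈ A, a.length = b.length)
    (IH : ∀ a ∈ A, ∀ b ∈ A, compatible a b)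
    (h1 : ∀ a ∈ A, ∀ b ∈ A, ∀ c c', g a c → g b c' → lexLe a b → ¬(c = Sig.R ∧ c' = Sig.L))
    (h2 : ∀ a ∈ A, ∀ b ∈ A, ∀ c c', g a c → g b c' → prec a b → trleq a b → Sig.le c c')
    (h3 : ∀ a ∈ A, ∀ b ∈ A, ∀ c c', g a c → g b c' → c = Sig.L → c' = Sig.R →
      lexLe a b → trleq a b) :
    ∀ u ∈ cLevel S lp, ∀ u' ∈ cLevel S lp, compatible u u' := by
  intro u hu u' hu'
  obtain ⟨a, ha, c, hgc, rfl⟩ := hsur u hu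
  obtain ⟨b, hb, c', hgc', rfl⟩ := hsur u' hu'
  have hlab : a.length = b.length := hlen a ha b hb
  rcases lexLt_trichotomy a b with hc | rfl | hc
  · exact compatible_append hlab (Or.inl hc)
      (compatPair_of_compatible (IH a ha b hb) (Or.inl hc))
      (fun he => absurd he (ne_of_lexLt hc))
      (h1 a ha b hb c c' hgc hgc' (Or.inl hc)) (h2 a ha b hb c c' hgc hgc')
      (fun hL hR => h3 a ha b hb c c' hgc hgc' hL hR (Or.inl hc))
  · have cp := compatPair_of_compatible (IH a ha a ha) (lexLe_refl a)
    rcases Nat.le_total c.val c'.val with hcc | hcc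
    · exact compatible_append rfl (lexLe_refl a) cp (fun _ => hcc)
        (h1 a ha a ha c c' hgc hgc' (lexLe_refl a))
        (fun hp _ => absurd hp (prec_irrefl a)) (fun _ _ => trleq_refl a)
    · exact compatible_symm (compatible_append rfl (lexLe_refl a) cp (fun _ => hcc)
        (h1 a ha a ha c' c hgc' hgc (lexLe_refl a))
        (fun hp _ => absurd hp (prec_irrefl a)) (fun _ _ => trleq_refl a))
  · exact compatible_symm (compatible_append hlab.symm (Or.inl hc)
      (compatPair_of_compatible (IH b hb a ha) (Or.inl hc))
      (fun he => absurd he (ne_of_lexLt hc))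
      (h1 b hb a ha c' c hgc' hgc (Or.inl hc)) (h2 b hb a ha c' c hgc' hgc)
      (fun hL hR => h3 b hb a ha c' c hgc' hgc hL hR (Or.inl hc)))

lemma all_levels_compat {S : Set Word} (hS : PosetDiary S) :
    ∀ l, ∀ u ∈ cLevel S l, ∀ u' ∈ cLevel S l, compatible u u' := by
  intro l
  induction l with
  | zero =>
    intro u hu u' hu'
    have h0 : u = [] := List.length_eq_zero_iff.1 hu.2
    have h0' : u' = [] := List.length_eq_zero_iff.1 hu'.2
    subst h0; subst h0'
    exact Or.inl ⟨lexLe_refl _, by intro l0 hl0; simp at hl0, by rintro h l1 hl1; simp at hl1⟩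
  | succ l IH =>
    intro u hu u' hu'
    have hex : ∃ w ∈ S, l < w.length := by
      obtain ⟨⟨w0, hw0, hpre⟩, hlen⟩ := hu
      have := hpre.length_le
      exact ⟨w0, hw0, by omega⟩
    rcases hS.2 l hex with ⟨h1, _, _, _⟩ | ⟨_, h2, _, _⟩ | ⟨_, _, h3, _⟩ | ⟨_, _, _, h4⟩
    · obtain ⟨w, hw⟩ := h1
      refine compat_level_gen (A := cLevel S l \ {w}) (g := fun z c => c = Sig.X) ?_ ?_ ?_ ?_ ?_ ?_ u hu u' hu'
      · intro u1 hu1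
        rw [leaf_classify hw] at hu1
        obtain ⟨z, hz, hz2⟩ := hu1
        exact ⟨z, hz, Sig.X, rfl, hz2.symm⟩
      · exact fun a ha b hb => ha.1.2.trans hb.1.2.symm
      · exact fun a ha b hb => IH a ha.1 b hb.1
      · rintro a _ b _ c c' rfl rfl _ ⟨hx, _⟩
        exact Sig.noConfusion hx
      · rintro a _ b _ c c' rfl rfl _ _
        exact sig_le_refl _
      · rintro a _ b _ c c' rfl rfl hL _ _
        exact Sig.noConfusion hL
    · obtain ⟨w, hw⟩ := h2
      refine compat_level_gen (A := cLevel S l)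
        (g := fun z c => c = fSplit w z ∨ (z = w ∧ c = Sig.R)) ?_ ?_ ?_ ?_ ?_ ?_ u hu u' hu'
      · intro u1 hu1
        by_cases he : u1 = w ++ [Sig.R]
        · exact ⟨w, hw.1, Sig.R, Or.inr ⟨rfl, rfl⟩, he⟩
        · have hmem : u1 ∈ (fun z => z ++ [fSplit w z]) '' cLevel S l := by
            rw [← split_classify hw]; exact ⟨hu1, he⟩
          obtain ⟨z, hz, hz2⟩ := hmem
          exact ⟨z, hz, fSplit w z, Or.inl rfl, hz2.symm⟩
      · exact fun a ha b hb => ha.2.trans hb.2.symm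
      · exact IH
      · rintro a _ b _ c c' hg hg' _ ⟨hcR, hcL⟩
        rcases hg' with rfl | ⟨_, rfl⟩
        · exact fSplit_ne_L w b hcL
        · exact Sig.noConfusion hcL
      · rintro a ha b hb c c' hg hg' hpr ht
        rcases hg' with rfl | ⟨hbw, rfl⟩
        · rcases hg with rfl | ⟨haw, rfl⟩
          · exact fSplit_mono ht
          · have htw : trleq w b := by rw [← haw]; exact ht
            have hne : w ≠ b := by
              rintro rfl
              rw [haw] at hpr
              exact prec_irrefl w hpr
            rw [fSplit_gt ((trleq_lexLe htw).resolve_right hne)]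
            exact sig_le_refl _
        · exact sig_le_R _
      · rintro a _ b _ c c' hg hg' hL _ _
        rcases hg with rfl | ⟨_, rfl⟩
        · exact absurd hL (fSplit_ne_L w a)
        · exact Sig.noConfusion hL
    · obtain ⟨v, w, hp⟩ := h3
      refine compat_level_gen (A := cLevel S l) (g := fun z c => c = fPerp v w z) ?_ ?_ ?_ ?_ ?_ ?_ u hu u' hu'
      · intro u1 hu1
        rw [perp_classify hp] at hu1
        obtain ⟨z, hz, hz2⟩ := hu1
        exact ⟨z, hz, fPerp v w z, rfl, hz2.symm⟩
      · exact fun a ha b hb => ha.2.trans hb.2.symm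
      · exact IH
      · rintro a _ b _ c c' rfl rfl _ ⟨_, hcL⟩
        exact fPerp_ne_L v w b hcL
      · rintro a ha b hb c c' rfl rfl hpr ht
        refine fPerp_mono hp ha ht ?_
        rintro ⟨rfl, rfl⟩
        exact hp.2.2.2.1 (Or.inl (Or.inl hpr))
      · rintro a _ b _ c c' rfl rfl hL _ _
        exact absurd hL (fPerp_ne_L v w a)
    · obtain ⟨v, w, hp⟩ := h4
      refine compat_level_gen (A := cLevel S l) (g := fun z c => c = fPrec v w z) ?_ ?_ ?_ ?_ ?_ ?_ u hu u' hu'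
      · intro u1 hu1
        rw [prec_classify hp] at hu1
        obtain ⟨z, hz, hz2⟩ := hu1
        exact ⟨z, hz, fPrec v w z, rfl, hz2.symm⟩
      · exact fun a ha b hb => ha.2.trans hb.2.symm
      · exact IH
      · rintro a _ b _ c c' rfl rfl hle hx
        exact fPrec_RL hp.2.2.1 hle hx
      · rintro a _ b _ c c' rfl rfl _ ht
        exact fPrec_mono hp ht
      · rintro a _ b _ c c' rfl rfl hL hR _
        exact fPrec_LR_trleq hp.2.2.1 hp.2.2.2.1 hL hR

end DiaryProof
/-- in a poset-diary all words of the closure are pairwise compatible, and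
consecutive level structures are related according to the type of the level. -/
theorem diary_level_structures (S : Set Word) (hS : PosetDiary S) :
    (∀ u ∈ segClosure S, ∀ v ∈ segClosure S, compatible u v) ∧
    ∀ l : ℕ, (∃ w ∈ S, l < w.length) →
      -- (1) Leaf: remove the leaf word
      ((∀ w, LeafLevelAt S l w → LevelIso (cLevel S l \ {w}) (cLevel S (l + 1))) ∧
      -- (2) Splitting: one vertex duplicated
      (SplitLevel S l →
        ∃ v' v'', v' ∈ cLevel S (l + 1) ∧ v'' ∈ cLevel S (l + 1) ∧
          lexLt v' v'' ∧ ¬ preceq v' v'' ∧ ¬ preceq v'' v' ∧ trleq v' v'' ∧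
          LevelIso (cLevel S l) (cLevel S (l + 1) \ {v''}) ∧
          (∀ u ∈ cLevel S (l + 1), u ≠ v' → u ≠ v'' →
            (preceq u v' ↔ preceq u v'') ∧ (preceq v' u ↔ preceq v'' u) ∧
            (trleq u v' ↔ trleq u v'') ∧ (trleq v' u ↔ trleq v'' u))) ∧
      -- (3) New ⊥: exactly one pair removed from ⊴, no change to ⪯
      (NewPerpLevel S l →
        ∃ e : Word → Word, Set.BijOn e (cLevel S l) (cLevel S (l + 1)) ∧
          (∀ u ∈ cLevel S l, ∀ v ∈ cLevel S l,
            (lexLe u v ↔ lexLe (e u) (e v)) ∧ (preceq u v ↔ preceq (e u) (e v))) ∧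
          ∃ a ∈ cLevel S l, ∃ b ∈ cLevel S l,
            trleq a b ∧ ¬ trleq (e a) (e b) ∧ perp (e a) (e b) ∧
            ∀ u ∈ cLevel S l, ∀ v ∈ cLevel S l, ¬ (u = a ∧ v = b) →
              (trleq u v ↔ trleq (e u) (e v))) ∧
      -- (4) New ≺: exactly one pair added to ≺, no pair added to ⊥
      (NewPrecLevel S l →
        ∃ e : Word → Word, Set.BijOn e (cLevel S l) (cLevel S (l + 1)) ∧
          (∀ u ∈ cLevel S l, ∀ v ∈ cLevel S l,
            (lexLe u v ↔ lexLe (e u) (e v)) ∧ (trleq u v ↔ trleq (e u) (e v)) ∧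
            (perp (e u) (e v) → perp u v)) ∧
          ∃ a ∈ cLevel S l, ∃ b ∈ cLevel S l,
            ¬ preceq a b ∧ prec (e a) (e b) ∧
            ∀ u ∈ cLevel S l, ∀ v ∈ cLevel S l, ¬ (u = a ∧ v = b) →
              (preceq u v ↔ preceq (e u) (e v)))) := by
  constructor
  · intro u hu v hv
    apply compatible_of_take
    exact all_levels_compat hS (min u.length v.length) _
      (take_mem_cLevel hu (min_le_left u.length v.length)) _
      (take_mem_cLevel hv (min_le_right u.length v.length))
  · intro l _
    exact ⟨fun w hw => leaf_main hw, fun h => split_main h, fun h => perp_main h,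
      fun h => prec_main h⟩
end
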